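/- arXiv:2002.00585 — 2 statements merged into one kernel-verified Lean document; each statement's English description precedes it below -/
import Mathlib

section
/- Fix a scalar α ∈ [-1/√s, 1/√s] for some s ∈ [d], an index i ∈ [d], and ε, δ > 0. Let w⁽¹⁾,…,w⁽ᵏ⁾ ∈ ℝᵈ be sampled i.i.d. uniformly from [-1,1]ᵈ, and u⁽¹⁾,…,u⁽ᵏ⁾ sampled i.i.d. uniformly from [-1,1]. If k ≥ (4/ε²)·log(2/δ), then with probability at least 1-δ there exist binary masks b⁽¹⁾,…,b⁽ᵏ⁾ ∈ {0,1}ᵈ such that the function g(x) = Σⱼ u⁽ʲ⁾ σ(⟨w⁽ʲ⁾ ⊙ b⁽ʲ⁾, x⟩), where σ is the ReLU and ⊙ is the entrywise product, satisfies |g(x) - α·xᵢ| ≤ 2ε for all x with ‖x‖_∞ ≤ 1. Moreover Σⱼ ‖b⁽ʲ⁾‖₀ ≤ 2 and each mask has at most one nonzero entry. -/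
open MeasureTheory ProbabilityTheory Real
open scoped Classical

noncomputable def relu (t : ℝ) : ℝ := max t 0

noncomputable def unif {α : Type*} [MeasureSpace α] (s : Set α) : Measure α :=
  (volume s)⁻¹ • volume.restrict s

noncomputable def l0 {d : ℕ} (b : Fin d → ℝ) : ℕ :=
  (Finset.univ.filter (fun t => b t ≠ 0)).card

/-!
Prune everything except the `i`-th input weight of two neurons: one with `wᵢ ≈ 1` and
`u ≈ α`, which reproduces `α xᵢ` for `xᵢ ≥ 0`, and one with `wᵢ ≈ -1` and `u ≈ -α`, which does
so for `xᵢ ≤ 0`; on each side the ReLU switches the other neuron off. A neuron has its pair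
`(wᵢ, u)` in a prescribed `ε × ε` square with probability `ε² / 4`, so by independence no
neuron out of `k` does with probability at most `(1 - ε² / 4) ^ k ≤ exp (-k ε² / 4) ≤ δ / 2`.
-/

section Uniform

variable {Ω : Type*} {mΩ : MeasurableSpace Ω} {μ : Measure Ω}

theorem unif_Icc_neg_one_one_apply {a b : ℝ} (ha : -1 ≤ a) (hb : b ≤ 1) :
    unif (Set.Icc (-1 : ℝ) 1) (Set.Icc a b) = ENNReal.ofReal ((b - a) / 2) := by
  rw [unif, Measure.smul_apply, smul_eq_mul, Measure.restrict_apply measurableSet_Icc,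
    Set.inter_eq_left.2 (Set.Icc_subset_Icc ha hb), Real.volume_Icc, Real.volume_Icc,
    ← ENNReal.ofReal_inv_of_pos (by norm_num), ← ENNReal.ofReal_mul (by norm_num)]
  congr 1
  ring

theorem aemeasurable_of_map_eq_unif {f : Ω → ℝ} (hf : μ.map f = unif (Set.Icc (-1 : ℝ) 1)) :
    AEMeasurable f μ := by
  refine AEMeasurable.of_map_ne_zero fun h ↦ ?_
  have := unif_Icc_neg_one_one_apply le_rfl le_rfl
  rw [← hf, h] at this
  norm_num at this

theorem measure_preimage_Icc_of_map_eq_unif {f : Ω → ℝ}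
    (hf : μ.map f = unif (Set.Icc (-1 : ℝ) 1)) {a b : ℝ} (ha : -1 ≤ a) (hb : b ≤ 1) :
    μ (f ⁻¹' Set.Icc a b) = ENNReal.ofReal ((b - a) / 2) := by
  rw [← Measure.map_apply_of_aemeasurable (aemeasurable_of_map_eq_unif hf) measurableSet_Icc,
    hf, unif_Icc_neg_one_one_apply ha hb]

end Uniform

namespace ProbabilityTheory

open Function

variable {Ω ι κ : Type*} {mΩ : MeasurableSpace Ω} {μ : Measure Ω}

theorem iIndep.iIndep_biSup {m : ι → MeasurableSpace Ω} (h_le : ∀ i, m i ≤ mΩ)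
    (h : iIndep m μ) {s : κ → Set ι} (hs : Pairwise (Disjoint on s)) :
    iIndep (fun j ↦ ⨆ i ∈ s j, m i) μ := by
  classical
  have := h.isProbabilityMeasure
  rw [iIndep_iff]
  intro S f hf
  induction S using Finset.induction with
  | empty => simp
  | @insert c T hcT ih =>
    have hdisj : Disjoint (s c) (⋃ j ∈ T, s j) :=
      Set.disjoint_iUnion₂_right.2 fun j hj ↦ hs fun hcj ↦ hcT (hcj ▸ hj)
    have hT : MeasurableSet[⨆ i ∈ ⋃ j ∈ T, s j, m i] (⋂ j ∈ T, f j) :=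
      Finset.measurableSet_biInter T fun j hj ↦
        MeasurableSpace.le_def.1 (biSup_mono (Set.subset_biUnion_of_mem (u := s) hj)) _
          (hf j (Finset.mem_insert_of_mem hj))
    rw [Finset.set_biInter_insert, Finset.prod_insert hcT,
      ← ih fun j hj ↦ hf j (Finset.mem_insert_of_mem hj)]
    exact (Indep_iff _ _ _).1 (indep_iSup_of_disjoint h_le h hdisj) _ _
      (hf c (Finset.mem_insert_self c T)) hT

section Pairs

variable {β : Type*} [MeasurableSpace β] {X Y : κ → Ω → β}

theorem iIndepFun.prodMk_of_sumElim (hX : ∀ j, Measurable (X j)) (hY : ∀ j, Measurable (Y j))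
    (h : iIndepFun (Sum.elim X Y) μ) : iIndepFun (fun j ω ↦ (X j ω, Y j ω)) μ := by
  rw [iIndepFun_iff_iIndep] at h ⊢
  have hpair : Pairwise (Disjoint on fun j : κ ↦ ({.inl j, .inr j} : Set (κ ⊕ κ))) :=
    fun j l hjl ↦ by simp [Set.disjoint_left, hjl]
  convert h.iIndep_biSup (fun x ↦ ?_) hpair using 2 with j
  · rw [iSup_pair]
    exact MeasurableSpace.comap_prodMk _ _
  · rcases x with j | j
    exacts [(hX j).comap_le, (hY j).comap_le]

theorem iIndepFun.prodMk_of_sumElim₀ (hX : ∀ j, AEMeasurable (X j) μ)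
    (hY : ∀ j, AEMeasurable (Y j) μ) (h : iIndepFun (Sum.elim X Y) μ) :
    iIndepFun (fun j ω ↦ (X j ω, Y j ω)) μ := by
  have hmk : iIndepFun (Sum.elim (fun j ↦ (hX j).mk) (fun j ↦ (hY j).mk)) μ :=
    h.congr fun x ↦ by rcases x with j | j; exacts [(hX j).ae_eq_mk, (hY j).ae_eq_mk]
  refine (hmk.prodMk_of_sumElim (fun j ↦ (hX j).measurable_mk)
    (fun j ↦ (hY j).measurable_mk)).congr fun j ↦ ?_
  filter_upwards [(hX j).ae_eq_mk, (hY j).ae_eq_mk] with ω hXω hYω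
  simp [hXω, hYω]

end Pairs

theorem iIndepFun.measure_compl_iUnion_preimage_le [Fintype κ] {β : Type*} [MeasurableSpace β]
    {Z : κ → Ω → β} (hZ : iIndepFun Z μ) (hZm : ∀ j, AEMeasurable (Z j) μ)
    {S : Set β} (hS : MeasurableSet S) {p : ℝ} (hp₀ : 0 ≤ p) (hp₁ : p ≤ 1)
    (hpZ : ∀ j, ENNReal.ofReal p ≤ μ (Z j ⁻¹' S)) :
    μ (⋃ j, Z j ⁻¹' S)ᶜ ≤ ENNReal.ofReal (exp (-(Fintype.card κ * p))) := by
  have := hZ.isProbabilityMeasure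
  have hmiss : ∀ j, μ (Z j ⁻¹' S)ᶜ ≤ ENNReal.ofReal (1 - p) := fun j ↦ by
    rw [prob_compl_eq_one_sub₀ ((hZm j).nullMeasurableSet_preimage hS),
      ENNReal.ofReal_sub _ hp₀, ENNReal.ofReal_one]
    exact tsub_le_tsub_left (hpZ j) 1
  rw [Set.compl_iUnion, hZ.meas_iInter (s := fun j ↦ (Z j ⁻¹' S)ᶜ) fun j ↦ ⟨Sᶜ, hS.compl, rfl⟩]
  calc ∏ j, μ (Z j ⁻¹' S)ᶜ ≤ ∏ _j : κ, ENNReal.ofReal (1 - p) :=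
        Finset.prod_le_prod' fun j _ ↦ hmiss j
    _ = ENNReal.ofReal ((1 - p) ^ Fintype.card κ) := by
        rw [Finset.prod_const, Finset.card_univ, ENNReal.ofReal_pow (by linarith)]
    _ ≤ ENNReal.ofReal (exp (-p) ^ Fintype.card κ) :=
        ENNReal.ofReal_le_ofReal <| pow_le_pow_left₀ (by linarith) (one_sub_le_exp_neg p) _
    _ = ENNReal.ofReal (exp (-(Fintype.card κ * p))) := by
        rw [← Real.exp_nat_mul, mul_neg]

theorem IndepFun.measure_preimage_Icc_prod_Icc {X Y : Ω → ℝ} (hXY : IndepFun X Y μ)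
    (hX : μ.map X = unif (Set.Icc (-1 : ℝ) 1)) (hY : μ.map Y = unif (Set.Icc (-1 : ℝ) 1))
    {a b c d : ℝ} (ha : -1 ≤ a) (hb : b ≤ 1) (hc : -1 ≤ c) (hd : d ≤ 1) :
    μ ((fun ω ↦ (X ω, Y ω)) ⁻¹' (Set.Icc a b ×ˢ Set.Icc c d)) =
      ENNReal.ofReal ((b - a) / 2) * ENNReal.ofReal ((d - c) / 2) := by
  rw [Set.mk_preimage_prod, hXY.measure_inter_preimage_eq_mul _ _ measurableSet_Icc
    measurableSet_Icc, measure_preimage_Icc_of_map_eq_unif hX ha hb,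
    measure_preimage_Icc_of_map_eq_unif hY hc hd]

theorem iIndepFun.measure_compl_iUnion_preimage_Icc_prod_Icc_le [Fintype κ] {X Y : κ → Ω → ℝ}
    (hXY : iIndepFun (Sum.elim X Y) μ) (hX : ∀ j, μ.map (X j) = unif (Set.Icc (-1 : ℝ) 1))
    (hY : ∀ j, μ.map (Y j) = unif (Set.Icc (-1 : ℝ) 1)) {ε a b c d : ℝ} (hε : 0 ≤ ε)
    (ha : -1 ≤ a) (hb : b ≤ 1) (hab : b - a = ε) (hc : -1 ≤ c) (hd : d ≤ 1) (hcd : d - c = ε) :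
    μ (⋃ j, (fun ω ↦ (X j ω, Y j ω)) ⁻¹' (Set.Icc a b ×ˢ Set.Icc c d))ᶜ ≤
      ENNReal.ofReal (exp (-(Fintype.card κ * (ε ^ 2 / 4)))) := by
  have hXm : ∀ j, AEMeasurable (X j) μ := fun j ↦ aemeasurable_of_map_eq_unif (hX j)
  have hYm : ∀ j, AEMeasurable (Y j) μ := fun j ↦ aemeasurable_of_map_eq_unif (hY j)
  refine (hXY.prodMk_of_sumElim₀ hXm hYm).measure_compl_iUnion_preimage_le
    (fun j ↦ (hXm j).prodMk (hYm j)) (measurableSet_Icc.prod measurableSet_Icc) (by positivity)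
    (by nlinarith) fun j ↦ le_of_eq (Eq.symm ?_)
  have hind : IndepFun (X j) (Y j) μ := hXY.indepFun Sum.inl_ne_inr
  rw [hind.measure_preimage_Icc_prod_Icc (hX j) (hY j) ha hb hc hd, hab, hcd,
    ← ENNReal.ofReal_mul (by positivity)]
  ring_nf

end ProbabilityTheory

theorem one_div_sqrt_natCast_le_one (s : ℕ) : 1 / √(s : ℝ) ≤ 1 := by
  rcases Nat.eq_zero_or_pos s with rfl | hs
  · simp
  · rw [div_le_one (by positivity)]
    exact Real.one_le_sqrt.2 (by exact_mod_cast hs)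

theorem exp_neg_mul_le_of_log_le {ε δ : ℝ} {k : ℕ} (hε : 0 < ε) (hδ : 0 < δ)
    (hk : 4 / ε ^ 2 * log (2 / δ) ≤ k) : exp (-(k * (ε ^ 2 / 4))) ≤ δ / 2 := by
  have hlog : log (2 / δ) ≤ k * (ε ^ 2 / 4) :=
    calc log (2 / δ) = 4 / ε ^ 2 * log (2 / δ) * (ε ^ 2 / 4) := by field_simp
      _ ≤ k * (ε ^ 2 / 4) := by gcongr
  calc exp (-(k * (ε ^ 2 / 4))) ≤ exp (-log (2 / δ)) := exp_le_exp.2 (neg_le_neg hlog)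
    _ = δ / 2 := by rw [exp_neg, exp_log (by positivity), inv_div]

theorem ofReal_one_sub_le_measure_inter {Ω : Type*} {mΩ : MeasurableSpace Ω} {μ : Measure Ω}
    [IsProbabilityMeasure μ] {s t : Set Ω} {a b : ℝ} (ha : 0 ≤ a) (hb : 0 ≤ b)
    (hs : μ sᶜ ≤ ENNReal.ofReal a) (ht : μ tᶜ ≤ ENNReal.ofReal b) :
    ENNReal.ofReal (1 - (a + b)) ≤ μ (s ∩ t) := by
  have h : 1 ≤ μ (s ∩ t) + ENNReal.ofReal (a + b) :=
    calc 1 = μ Set.univ := measure_univ.symm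
      _ ≤ μ (s ∩ t) + μ (sᶜ ∪ tᶜ) := by rw [← Set.compl_inter]; exact measure_univ_le_add_compl _
      _ ≤ μ (s ∩ t) + (μ sᶜ + μ tᶜ) := by gcongr; exact measure_union_le _ _
      _ ≤ μ (s ∩ t) + ENNReal.ofReal (a + b) := by
          rw [ENNReal.ofReal_add ha hb]; gcongr
  rw [ENNReal.ofReal_sub _ (by positivity), ENNReal.ofReal_one]
  exact tsub_le_iff_right.2 h

section Pruning

variable {d k : ℕ}

def IsPrunedApprox (W : Fin k → Fin d → ℝ) (u : Fin k → ℝ) (i : Fin d) (α ε : ℝ)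
    (b : Fin k → Fin d → ℝ) : Prop :=
  (∀ j t, b j t = 0 ∨ b j t = 1) ∧
    (∀ x : Fin d → ℝ, (∀ t, |x t| ≤ 1) →
      |(∑ j, u j * relu (∑ t, W j t * b j t * x t)) - α * x i| ≤ ε) ∧
    (∑ j, l0 (b j)) ≤ 2 ∧ ∀ j, l0 (b j) ≤ 1

theorem l0_zero : l0 (0 : Fin d → ℝ) = 0 := by
  simp [l0]

theorem l0_single_one (i : Fin d) : l0 (Pi.single i 1 : Fin d → ℝ) = 1 := by
  simp [l0, Pi.single_apply, Finset.filter_eq']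

theorem isPrunedApprox_zero (W : Fin k → Fin d → ℝ) (u : Fin k → ℝ) (i : Fin d) {α ε : ℝ}
    (hα : |α| ≤ ε) : IsPrunedApprox W u i α ε 0 := by
  refine ⟨fun _ _ ↦ .inl rfl, fun x hx ↦ ?_, by simp [l0_zero], fun _ ↦ by simp [l0_zero]⟩
  simpa [relu, abs_mul] using (mul_le_of_le_one_right (abs_nonneg α) (hx i)).trans hα

theorem abs_relu_two_neurons_sub_le {u₁ u₂ w₁ w₂ α ε t : ℝ} (hw₁ : 0 ≤ w₁) (hw₂ : w₂ ≤ 0)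
    (h₁ : |u₁ * w₁ - α| ≤ ε) (h₂ : |u₂ * w₂ - α| ≤ ε) (ht : |t| ≤ 1) :
    |u₁ * relu (w₁ * t) + u₂ * relu (w₂ * t) - α * t| ≤ ε := by
  obtain ⟨v, hv, hout⟩ : ∃ v, |v - α| ≤ ε ∧
      u₁ * relu (w₁ * t) + u₂ * relu (w₂ * t) = v * t := by
    rcases le_total 0 t with ht₀ | ht₀
    · refine ⟨u₁ * w₁, h₁, ?_⟩
      rw [relu, relu, max_eq_left (mul_nonneg hw₁ ht₀),
        max_eq_right (mul_nonpos_of_nonpos_of_nonneg hw₂ ht₀)]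
      ring
    · refine ⟨u₂ * w₂, h₂, ?_⟩
      rw [relu, relu, max_eq_right (mul_nonpos_of_nonneg_of_nonpos hw₁ ht₀),
        max_eq_left (mul_nonneg_of_nonpos_of_nonpos hw₂ ht₀)]
      ring
  rw [hout, ← sub_mul, abs_mul]
  exact (mul_le_of_le_one_right (abs_nonneg _) ht).trans hv

theorem exists_isPrunedApprox_of_two_neurons {W : Fin k → Fin d → ℝ} {u : Fin k → ℝ}
    {i : Fin d} {α ε : ℝ} {j₁ j₂ : Fin k} (hW₁ : 0 < W j₁ i) (hW₂ : W j₂ i < 0)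
    (h₁ : |u j₁ * W j₁ i - α| ≤ ε) (h₂ : |u j₂ * W j₂ i - α| ≤ ε) :
    ∃ b, IsPrunedApprox W u i α ε b := by
  have hne : j₁ ≠ j₂ := by rintro rfl; linarith
  set T : Finset (Fin k) := {j₁, j₂}
  have hl0 : ∀ j, l0 (if j ∈ T then Pi.single i 1 else 0) = if j ∈ T then 1 else 0 :=
    fun j ↦ by split_ifs <;> simp [l0_single_one, l0_zero]
  refine ⟨fun j ↦ if j ∈ T then Pi.single i 1 else 0, fun j t ↦ ?_, fun x hx ↦ ?_, ?_,
    fun j ↦ by rw [hl0]; split_ifs <;> simp⟩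
  · dsimp only
    split_ifs <;> simp [Pi.single_apply, em']
  · have hpre : ∀ j, ∑ t, W j t * (if j ∈ T then Pi.single i 1 else 0 : Fin d → ℝ) t * x t =
        if j ∈ T then W j i * x i else 0 := fun j ↦ by
      split_ifs <;> simp [Pi.single_apply]
    simp_rw [hpre, apply_ite relu, show relu 0 = 0 from max_self 0, mul_ite, mul_zero,
      Finset.sum_ite_mem]
    rw [Finset.univ_inter, Finset.sum_pair hne]
    exact abs_relu_two_neurons_sub_le hW₁.le hW₂.le h₁ h₂ (hx i)
  · simp_rw [hl0, Finset.sum_ite_mem, Finset.univ_inter, Finset.sum_const, smul_eq_mul, mul_one]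
    exact Finset.card_le_two

theorem exists_Icc_mem_subset_Icc {α ε : ℝ} (hα : |α| ≤ 1) (hε₀ : 0 ≤ ε) (hε : ε ≤ 2) :
    ∃ c, -1 ≤ c ∧ c + ε ≤ 1 ∧ α ∈ Set.Icc c (c + ε) := by
  obtain ⟨hα₁, hα₂⟩ := abs_le.1 hα
  have hmin : α - ε ≤ min α (1 - ε) := le_min (by linarith) (by linarith)
  exact ⟨min α (1 - ε), le_min hα₁ (by linarith), by linarith [min_le_right α (1 - ε)],
    min_le_left _ _, by linarith⟩

theorem abs_mul_sub_le_of_mem_Icc {v w α c ε : ℝ} (hc : -1 ≤ c) (hcε : c + ε ≤ 1)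
    (hα : α ∈ Set.Icc c (c + ε)) (hv : v ∈ Set.Icc c (c + ε)) (hw : w ∈ Set.Icc (1 - ε) 1) :
    |v * w - α| ≤ 2 * ε := by
  have hv₁ : |v| ≤ 1 := abs_le.2 ⟨by linarith [hv.1], by linarith [hv.2]⟩
  have hw₁ : |w - 1| ≤ ε := abs_le.2 ⟨by linarith [hw.1], by linarith [hw.2, hα.1, hα.2]⟩
  have hvα : |v - α| ≤ ε := abs_le.2 ⟨by linarith [hv.1, hα.2], by linarith [hv.2, hα.1]⟩
  calc |v * w - α| = |v * (w - 1) + (v - α)| := by ring_nf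
    _ ≤ |v| * |w - 1| + |v - α| := by rw [← abs_mul]; exact abs_add_le _ _
    _ ≤ 1 * ε + ε := by gcongr
    _ = 2 * ε := by ring

theorem exists_isPrunedApprox_of_mem_Icc {W : Fin k → Fin d → ℝ} {u : Fin k → ℝ}
    {i : Fin d} {α ε c : ℝ} (hε : ε < 1) (hc : -1 ≤ c) (hcε : c + ε ≤ 1)
    (hα : α ∈ Set.Icc c (c + ε)) {j₁ j₂ : Fin k}
    (h₁ : W j₁ i ∈ Set.Icc (1 - ε) 1 ∧ u j₁ ∈ Set.Icc c (c + ε))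
    (h₂ : W j₂ i ∈ Set.Icc (-1) (-1 + ε) ∧ u j₂ ∈ Set.Icc (-(c + ε)) (-c)) :
    ∃ b, IsPrunedApprox W u i α (2 * ε) b := by
  obtain ⟨hW₁, hu₁⟩ := h₁
  obtain ⟨hW₂, hu₂⟩ := h₂
  have hacc₂ := abs_mul_sub_le_of_mem_Icc hc hcε hα (v := -u j₂) (w := -W j₂ i)
    ⟨by linarith [hu₂.2], by linarith [hu₂.1]⟩ ⟨by linarith [hW₂.2], by linarith [hW₂.1]⟩
  rw [neg_mul_neg] at hacc₂
  exact exists_isPrunedApprox_of_two_neurons (by linarith [hW₁.1]) (by linarith [hW₂.2])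
    (abs_mul_sub_le_of_mem_Icc hc hcε hα hu₁ hW₁) hacc₂

end Pruning

theorem single_coordinate_by_pruning_general
    (d k s : ℕ)
    (α : ℝ) (hα : |α| ≤ 1 / Real.sqrt s) (i : Fin d)
    (ε δ : ℝ) (hε : 0 < ε) (hδ : 0 < δ)
    {Ω : Type*} [MeasurableSpace Ω] (μ : Measure Ω) [IsProbabilityMeasure μ]
    (W : Fin k → Ω → (Fin d → ℝ)) (u : Fin k → Ω → ℝ)
    (hindep : iIndepFun
      (Sum.elim (fun p : Fin k × Fin d => fun ω => W p.1 ω p.2)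
        (fun j : Fin k => u j)) μ)
    (hWdist : ∀ (j : Fin k) (t : Fin d),
      μ.map (fun ω => W j ω t) = unif (Set.Icc (-1 : ℝ) 1))
    (hudist : ∀ j : Fin k, μ.map (u j) = unif (Set.Icc (-1 : ℝ) 1))
    (hk : 4 / ε ^ 2 * Real.log (2 / δ) ≤ (k : ℝ)) :
    ENNReal.ofReal (1 - δ) ≤ μ {ω | ∃ b : Fin k → Fin d → ℝ,
      (∀ j t, b j t = 0 ∨ b j t = 1) ∧
      (∀ x : Fin d → ℝ, (∀ t, |x t| ≤ 1) →
        |(∑ j, u j ω * relu (∑ t, W j ω t * b j t * x t)) - α * x i| ≤ 2 * ε) ∧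
      (∑ j, l0 (b j)) ≤ 2 ∧ (∀ j, l0 (b j) ≤ 1)} := by
  have hα₁ : |α| ≤ 1 := hα.trans (one_div_sqrt_natCast_le_one s)
  rcases le_or_gt (1 / 2) ε with hε₂ | hε₂
  · calc ENNReal.ofReal (1 - δ) ≤ μ Set.univ := by
          rw [measure_univ]; exact ENNReal.ofReal_le_one.2 (by linarith)
      _ ≤ _ := measure_mono fun ω _ ↦
          Set.mem_ofPred.2 ⟨0, isPrunedApprox_zero (W · ω) (u · ω) i (by linarith)⟩
  obtain ⟨c, hc, hcε, hαc⟩ := exists_Icc_mem_subset_Icc hα₁ hε.le (by linarith)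
  have hWu : iIndepFun (Sum.elim (fun j ω ↦ W j ω i) u) μ := by
    convert hindep.precomp (g := Sum.map (·, i) id)
      (Sum.map_injective.2 ⟨fun _ _ h ↦ (Prod.ext_iff.1 h).1, Function.injective_id⟩) using 1
    ext (j | j) <;> rfl
  have hmiss : ∀ a b c d, -1 ≤ a → b ≤ 1 → b - a = ε → -1 ≤ c → d ≤ 1 → d - c = ε →
      μ (⋃ j, (fun ω ↦ (W j ω i, u j ω)) ⁻¹' (Set.Icc a b ×ˢ Set.Icc c d))ᶜ ≤
        ENNReal.ofReal (δ / 2) := fun a b c d ha hb hab hc hd hcd ↦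
    (hWu.measure_compl_iUnion_preimage_Icc_prod_Icc_le (hWdist · i) hudist hε.le ha hb hab
      hc hd hcd).trans (by
        rw [Fintype.card_fin]
        exact ENNReal.ofReal_le_ofReal (exp_neg_mul_le_of_log_le hε hδ hk))
  rw [← add_halves δ]
  refine (ofReal_one_sub_le_measure_inter (by positivity) (by positivity)
    (hmiss (1 - ε) 1 c (c + ε) (by linarith) le_rfl (by ring) hc hcε (by ring))
    (hmiss (-1) (-1 + ε) (-(c + ε)) (-c) le_rfl (by linarith) (by ring) (by linarith)
      (by linarith) (by ring))).trans (measure_mono ?_)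
  rintro ω ⟨hpos, hneg⟩
  obtain ⟨j₁, hpos⟩ := Set.mem_iUnion.1 hpos
  obtain ⟨j₂, hneg⟩ := Set.mem_iUnion.1 hneg
  exact exists_isPrunedApprox_of_mem_Icc (W := (W · ω)) (u := (u · ω)) (by linarith) hc hcε
    hαc hpos hneg

/-- a single linear coordinate function `x ↦ α·xᵢ` can be approximated,
with probability at least `1-δ`, by pruning a random two-layer ReLU network whose
weights are i.i.d. uniform on `[-1,1]`, provided `k ≥ (4/ε²)·log(2/δ)`; the mask uses
at most 2 weights in total and at most one per neuron. -/
theorem single_coordinate_by_pruning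
    (d k s : ℕ) (hd : 0 < d) (hs1 : 1 ≤ s) (hsd : s ≤ d)
    (α : ℝ) (hα : |α| ≤ 1 / Real.sqrt s) (i : Fin d)
    (ε δ : ℝ) (hε : 0 < ε) (hδ : 0 < δ)
    {Ω : Type*} [MeasurableSpace Ω] (μ : Measure Ω) [IsProbabilityMeasure μ]
    (W : Fin k → Ω → (Fin d → ℝ)) (u : Fin k → Ω → ℝ)
    (hindep : iIndepFun
      (Sum.elim (fun p : Fin k × Fin d => fun ω => W p.1 ω p.2)
        (fun j : Fin k => u j)) μ)
    (hWdist : ∀ (j : Fin k) (t : Fin d),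
      μ.map (fun ω => W j ω t) = unif (Set.Icc (-1 : ℝ) 1))
    (hudist : ∀ j : Fin k, μ.map (u j) = unif (Set.Icc (-1 : ℝ) 1))
    (hk : 4 / ε ^ 2 * Real.log (2 / δ) ≤ (k : ℝ)) :
    ENNReal.ofReal (1 - δ) ≤ μ {ω | ∃ b : Fin k → Fin d → ℝ,
      (∀ j t, b j t = 0 ∨ b j t = 1) ∧
      (∀ x : Fin d → ℝ, (∀ t, |x t| ≤ 1) →
        |(∑ j, u j ω * relu (∑ t, W j ω t * b j t * x t)) - α * x i| ≤ 2 * ε) ∧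
      (∑ j, l0 (b j)) ≤ 2 ∧ (∀ j, l0 (b j) ≤ 1)} :=
  single_coordinate_by_pruning_general d k s α hα i ε δ hε hδ μ W u hindep hWdist hudist hk
end

section
/- Fix s ∈ [d], a vector w* ∈ [-1/√s, 1/√s]ᵈ with at most s nonzero coordinates, and ε, δ > 0. Let w⁽¹⁾,…,w⁽ᵏ⁾ ∈ ℝᵈ be i.i.d. uniform on [-1,1]ᵈ and u ∈ [-1,1]ᵏ uniform on [-1,1]ᵏ. If k ≥ s·⌈(16s²/ε²)·log(2s/δ)⌉, then with probability at least 1-δ there exist binary masks b⁽¹⁾,…,b⁽ᵏ⁾ ∈ {0,1}ᵈ such that g(x) = Σᵢ uᵢ σ(⟨w⁽ⁱ⁾ ⊙ b⁽ⁱ⁾, x⟩) satisfies |g(x) - ⟨w*, x⟩| ≤ ε for all x with ‖x‖_∞ ≤ 1; moreover Σᵢ ‖b⁽ⁱ⁾‖₀ ≤ 2s and each b⁽ⁱ⁾ has at most one nonzero entry. -/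
open MeasureTheory ProbabilityTheory Real
open scoped Classical

/-!
Write `a * x = a * relu x - a * relu (-x)`. For a sign `σ = ±1`, a neuron whose weight into input
`t` is within `2η` of `σ` and whose output weight is within `2η` of `σ * w*ₜ` computes
`σ * w*ₜ * relu (σ * xₜ)` up to `4η`; keeping only that one weight, one such neuron per support
coordinate and sign gives at most `2s` active weights and total error `4ηs = ε` for `η = ε / (4s)`.
Reserve a block of `n` neurons for each support coordinate. A neuron of the block is good for a
given sign with probability `η²` (each of the two windows has probability `η`), independently, so
some coordinate misses a sign with probability at most `2s (1 - η²)ⁿ ≤ 2s exp (-η² n) ≤ δ`.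
When `ε ≥ s` the empty mask already works, since `|⟨w*, x⟩| ≤ ‖w*‖₀ ≤ s`.
-/

lemma relu_nonneg (t : ℝ) : 0 ≤ relu t := le_max_right t 0

lemma relu_mul_of_nonneg {c : ℝ} (hc : 0 ≤ c) (t : ℝ) : relu (c * t) = c * relu t := by
  simp only [relu, mul_max_of_nonneg _ _ hc, mul_zero]

lemma relu_sub_relu_neg (t : ℝ) : relu t - relu (-t) = t := by
  rcases le_total 0 t with h | h <;> simp [relu, h]

lemma relu_add_relu_neg (t : ℝ) : relu t + relu (-t) = |t| := by
  rcases le_total 0 t with h | h <;> simp [relu, h, abs_of_nonneg, abs_of_nonpos]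

/-- The centre is pulled towards `0` by the factor `1 - η`, so that for `|c| ≤ 1` the window lies
in `[-1, 1]` while all its points stay within `2 η` of `c`. -/
def window (η c : ℝ) : Set ℝ := Metric.closedBall ((1 - η) * c) η

lemma abs_units_cast (σ : ℤˣ) : |((σ : ℤ) : ℝ)| = 1 := by
  rcases Int.units_eq_one_or σ with rfl | rfl <;> simp

section Window

variable {η c v : ℝ}

lemma window_eq_Icc : window η c = Set.Icc ((1 - η) * c - η) ((1 - η) * c + η) :=
  Real.closedBall_eq_Icc

lemma abs_window_center_le (hη : η ≤ 1) (hc : |c| ≤ 1) : |(1 - η) * c| ≤ 1 - η := by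
  rw [abs_mul, abs_of_nonneg (sub_nonneg.2 hη)]
  exact mul_le_of_le_one_right (sub_nonneg.2 hη) hc

lemma abs_le_one_of_mem_window (hη : η ≤ 1) (hc : |c| ≤ 1) (hv : v ∈ window η c) : |v| ≤ 1 := by
  rw [window, Metric.mem_closedBall, Real.dist_eq] at hv
  have hm := abs_window_center_le hη hc
  rw [abs_le] at hv hm ⊢
  constructor <;> linarith

lemma abs_sub_le_of_mem_window (hη : 0 ≤ η) (hc : |c| ≤ 1) (hv : v ∈ window η c) :
    |v - c| ≤ 2 * η := by
  rw [window, Metric.mem_closedBall, Real.dist_eq] at hv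
  calc |v - c| ≤ |v - (1 - η) * c| + |(1 - η) * c - c| := abs_sub_le _ _ _
    _ = |v - (1 - η) * c| + η * |c| := by
        rw [show (1 - η) * c - c = -(η * c) by ring, abs_neg, abs_mul, abs_of_nonneg hη]
    _ ≤ η + η * 1 := by gcongr
    _ = 2 * η := by ring

lemma units_eq_of_mem_window (hη : η < 1 / 2) {σ τ : ℤˣ} (hσ : v ∈ window η σ)
    (hτ : v ∈ window η τ) : σ = τ := by
  have h0 : 0 ≤ η := Metric.nonneg_of_mem_closedBall hσ
  have hστ : |((σ : ℤ) : ℝ) - τ| < 2 :=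
    calc |((σ : ℤ) : ℝ) - τ| ≤ |v - σ| + |v - τ| := by
          rw [abs_sub_comm v]
          exact abs_sub_le _ _ _
      _ ≤ 2 * η + 2 * η :=
          add_le_add (abs_sub_le_of_mem_window h0 (abs_units_cast σ).le hσ)
            (abs_sub_le_of_mem_window h0 (abs_units_cast τ).le hτ)
      _ < 2 := by linarith
  rcases Int.units_eq_one_or σ with rfl | rfl <;> rcases Int.units_eq_one_or τ with rfl | rfl <;>
    first | rfl | norm_num at hστ

end Window

lemma abs_mul_relu_sub_le {η a σ u w : ℝ} (x : ℝ) (hσ : |σ| = 1) (hη0 : 0 ≤ η) (hη : η ≤ 1 / 2)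
    (ha : |a| ≤ 1) (hw : w ∈ window η σ) (hu : u ∈ window η (σ * a)) :
    |u * relu (w * x) - σ * a * relu (σ * x)| ≤ 4 * η * relu (σ * x) := by
  have hσσ : σ * σ = 1 := by rw [← abs_mul_abs_self, hσ, one_mul]
  have hσa : |σ * a| ≤ 1 := by rwa [abs_mul, hσ, one_mul]
  have hσw : |σ * w - 1| ≤ 2 * η := by
    rw [show σ * w - 1 = σ * (w - σ) by rw [mul_sub, hσσ], abs_mul, hσ, one_mul]
    exact abs_sub_le_of_mem_window hη0 hσ.le hw
  have hu1 : |u| ≤ 1 := abs_le_one_of_mem_window (by linarith) hσa hu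
  have hua : |u - σ * a| ≤ 2 * η := abs_sub_le_of_mem_window hη0 hσa hu
  have hrelu : relu (w * x) = σ * w * relu (σ * x) := by
    rw [← relu_mul_of_nonneg (by linarith [(abs_le.1 hσw).1]),
      show σ * w * (σ * x) = σ * σ * (w * x) by ring, hσσ, one_mul]
  calc |u * relu (w * x) - σ * a * relu (σ * x)|
      = |(u * (σ * w - 1) + (u - σ * a)) * relu (σ * x)| := by
        rw [hrelu]
        congr 1
        ring
    _ = |u * (σ * w - 1) + (u - σ * a)| * relu (σ * x) := by
        rw [abs_mul, abs_of_nonneg (relu_nonneg _)]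
    _ ≤ (1 * (2 * η) + 2 * η) * relu (σ * x) := by
        gcongr
        · exact relu_nonneg _
        · exact (abs_add_le _ _).trans (by rw [abs_mul]; gcongr)
    _ = 4 * η * relu (σ * x) := by ring

lemma abs_sum_units_mul_relu_sub_le {η a x : ℝ} {u w : ℤˣ → ℝ} (hη0 : 0 ≤ η) (hη : η ≤ 1 / 2)
    (ha : |a| ≤ 1) (hx : |x| ≤ 1) (hw : ∀ σ : ℤˣ, w σ ∈ window η σ)
    (hu : ∀ σ : ℤˣ, u σ ∈ window η (σ * a)) :
    |∑ σ, u σ * relu (w σ * x) - a * x| ≤ 4 * η := by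
  have hax : a * x = ∑ σ : ℤˣ, σ * a * relu (σ * x) := by
    simp only [UnitsInt.univ, Finset.sum_pair (show (1 : ℤˣ) ≠ -1 by decide), Units.val_one,
      Units.val_neg, Int.cast_one, Int.cast_neg, one_mul, neg_mul]
    linear_combination -a * relu_sub_relu_neg x
  have hx' : ∑ σ : ℤˣ, relu (σ * x) = |x| := by
    simpa using relu_add_relu_neg x
  calc |∑ σ, u σ * relu (w σ * x) - a * x|
      = |∑ σ, (u σ * relu (w σ * x) - σ * a * relu (σ * x))| := by
        rw [hax, Finset.sum_sub_distrib]
    _ ≤ ∑ σ : ℤˣ, 4 * η * relu (σ * x) :=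
        (Finset.abs_sum_le_sum_abs _ _).trans <| Finset.sum_le_sum fun σ _ =>
          abs_mul_relu_sub_le x (abs_units_cast σ) hη0 hη ha (hw σ) (hu σ)
    _ = 4 * η * |x| := by rw [← Finset.mul_sum, hx']
    _ ≤ 4 * η := mul_le_of_le_one_right (by linarith) hx

section SelectMask

variable {P : Type*} [Fintype P] {k d : ℕ} (sel : P → Fin k) (coord : P → Fin d)

def selectMask : Fin k → Fin d → ℝ := fun j t => if ∃ p, sel p = j ∧ coord p = t then 1 else 0

lemma selectMask_eq_zero_or_one (j : Fin k) (t : Fin d) :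
    selectMask sel coord j t = 0 ∨ selectMask sel coord j t = 1 := by
  unfold selectMask
  split_ifs <;> simp

lemma l0_selectMask_le (j : Fin k) :
    l0 (selectMask sel coord j) ≤ (Finset.univ.filter fun p => sel p = j).card := by
  refine (Finset.card_le_card fun t ht => ?_).trans (Finset.card_image_le (f := coord))
  simp only [selectMask, Finset.mem_filter, Finset.mem_univ, true_and, ne_eq, ite_eq_right_iff,
    one_ne_zero, imp_false, not_not] at ht
  simpa [Finset.mem_image] using ht

lemma sum_l0_selectMask_le : ∑ j, l0 (selectMask sel coord j) ≤ Fintype.card P := by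
  calc ∑ j, l0 (selectMask sel coord j) ≤ ∑ j, (Finset.univ.filter fun p => sel p = j).card :=
        Finset.sum_le_sum fun j _ => l0_selectMask_le sel coord j
    _ = Fintype.card P := (Finset.card_eq_sum_card_fiberwise (by simp)).symm

variable {sel}

lemma l0_selectMask_le_one (hsel : Function.Injective sel) (j : Fin k) :
    l0 (selectMask sel coord j) ≤ 1 :=
  (l0_selectMask_le sel coord j).trans <| Finset.card_le_one.2 fun p hp q hq => hsel <| by
    simp only [Finset.mem_filter] at hp hq
    rw [hp.2, hq.2]

lemma selectMask_apply_sel (hsel : Function.Injective sel) (p : P) (t : Fin d) :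
    selectMask sel coord (sel p) t = if coord p = t then 1 else 0 := by
  simp only [selectMask, hsel.eq_iff, exists_eq_left]

lemma sum_mul_relu_selectMask (hsel : Function.Injective sel) (W : Fin k → Fin d → ℝ)
    (u : Fin k → ℝ) (x : Fin d → ℝ) :
    ∑ j, u j * relu (∑ t, W j t * selectMask sel coord j t * x t) =
      ∑ p, u (sel p) * relu (W (sel p) (coord p) * x (coord p)) := by
  refine (Fintype.sum_of_injective sel hsel _ _ (fun j hj => ?_) fun p => ?_).symm
  · have hzero : ∀ t, selectMask sel coord j t = 0 := fun t => if_neg fun ⟨p, hp, _⟩ => hj ⟨p, hp⟩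
    simp [hzero, relu]
  · simp [selectMask_apply_sel coord hsel, mul_ite]

end SelectMask

lemma unif_Icc_of_le {a b c e : ℝ} (hab : a < b) (hac : a ≤ c) (heb : e ≤ b) :
    unif (Set.Icc a b) (Set.Icc c e) = ENNReal.ofReal ((e - c) / (b - a)) := by
  rw [unif, Measure.smul_apply, Measure.restrict_apply measurableSet_Icc,
    Set.inter_eq_left.2 (Set.Icc_subset_Icc hac heb), Real.volume_Icc, Real.volume_Icc,
    ENNReal.ofReal_div_of_pos (sub_pos.2 hab), smul_eq_mul, ENNReal.div_eq_inv_mul]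

lemma isProbabilityMeasure_unif_Icc {a b : ℝ} (hab : a < b) :
    IsProbabilityMeasure (unif (Set.Icc a b)) := by
  constructor
  rw [unif, Measure.smul_apply, Measure.restrict_apply_univ, Real.volume_Icc, smul_eq_mul,
    ENNReal.inv_mul_cancel (by simpa using hab) ENNReal.ofReal_ne_top]

instance : IsProbabilityMeasure (unif (Set.Icc (-1 : ℝ) 1)) :=
  isProbabilityMeasure_unif_Icc (by norm_num)

lemma unif_window {η c : ℝ} (hη1 : η ≤ 1) (hc : |c| ≤ 1) :
    unif (Set.Icc (-1 : ℝ) 1) (window η c) = ENNReal.ofReal η := by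
  have hm := abs_le.1 (abs_window_center_le hη1 hc)
  rw [window_eq_Icc, unif_Icc_of_le (by norm_num) (by linarith) (by linarith)]
  congr 1
  ring

lemma measure_iInter_compl_inter_preimage_le {Ω β ι : Type*} [MeasurableSpace Ω]
    [MeasurableSpace β] [Fintype ι] {μ : Measure Ω} {X Y : ι → Ω → β}
    (h : iIndepFun (Sum.elim X Y) μ) {A B : Set β} (hA : MeasurableSet A) (hB : MeasurableSet B) :
    μ (⋂ i, (X i ⁻¹' A ∩ Y i ⁻¹' B)ᶜ) ≤
      ∏ i, (μ (X i ⁻¹' A) * μ (Y i ⁻¹' Bᶜ) + μ (X i ⁻¹' Aᶜ)) := by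
  have := h.isProbabilityMeasure
  -- Split according to which `X i` land in `A`: each piece is an intersection of preimages under
  -- distinct members of the independent family.
  let sets (c : ι → Bool) : ι ⊕ ι → Set β :=
    Sum.elim (fun i => if c i then A else Aᶜ) (fun i => if c i then Bᶜ else Set.univ)
  have hcover : ⋂ i, (X i ⁻¹' A ∩ Y i ⁻¹' B)ᶜ ⊆
      ⋃ c : ι → Bool, ⋂ j, Sum.elim X Y j ⁻¹' sets c j := by
    intro ω hω
    simp only [Set.mem_iInter, Set.mem_compl_iff, Set.mem_inter_iff, Set.mem_preimage,
      not_and] at hω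
    refine Set.mem_iUnion.2 ⟨fun i => decide (X i ω ∈ A), Set.mem_iInter.2 ?_⟩
    rintro (i | i) <;> by_cases hi : X i ω ∈ A <;> simp [sets, hi, hω i]
  have hpiece (c : ι → Bool) : μ (⋂ j, Sum.elim X Y j ⁻¹' sets c j) =
      ∏ i, if c i then μ (X i ⁻¹' A) * μ (Y i ⁻¹' Bᶜ) else μ (X i ⁻¹' Aᶜ) := by
    rw [h.meas_iInter fun j => ⟨sets c j, ?_, rfl⟩, Fintype.prod_sum_type,
      ← Finset.prod_mul_distrib]
    · refine Finset.prod_congr rfl fun i _ => ?_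
      cases hc : c i <;> simp [sets, hc]
    · rcases j with i | i <;> cases hc : c i <;> simp [sets, hc, hA, hB]
  calc μ (⋂ i, (X i ⁻¹' A ∩ Y i ⁻¹' B)ᶜ)
      ≤ ∑ c : ι → Bool, μ (⋂ j, Sum.elim X Y j ⁻¹' sets c j) :=
        (measure_mono hcover).trans (measure_iUnion_fintype_le _ _)
    _ = ∏ i, ∑ b : Bool, if b then μ (X i ⁻¹' A) * μ (Y i ⁻¹' Bᶜ) else μ (X i ⁻¹' Aᶜ) := by
        rw [Fintype.prod_sum]
        exact Finset.sum_congr rfl fun c _ => hpiece c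
    _ = ∏ i, (μ (X i ⁻¹' A) * μ (Y i ⁻¹' Bᶜ) + μ (X i ⁻¹' Aᶜ)) := by
        simp only [Fintype.sum_bool, if_true, Bool.false_eq_true, if_false]

lemma ProbabilityTheory.iIndepFun.sum_elim_comp {Ω β ι ι' α γ : Type*} [MeasurableSpace Ω]
    [MeasurableSpace β] {μ : Measure Ω} {F : α → Ω → β} {G : γ → Ω → β} (h : iIndepFun (Sum.elim F G) μ)
    {f : ι → α} {g : ι' → γ} (hf : Function.Injective f) (hg : Function.Injective g) :
    iIndepFun (Sum.elim (F ∘ f) (G ∘ g)) μ := by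
  simpa only [Sum.elim_map] using h.precomp (hf.sumMap hg)

lemma measure_preimage_eq_of_map_eq {Ω β : Type*} [MeasurableSpace Ω] [MeasurableSpace β]
    {μ : Measure Ω} {ν : Measure β} [NeZero ν] {X : Ω → β} (hX : μ.map X = ν) {s : Set β}
    (hs : MeasurableSet s) : μ (X ⁻¹' s) = ν s := by
  have hXm : AEMeasurable X μ := by
    by_contra h
    exact NeZero.ne ν (hX ▸ Measure.map_of_not_aemeasurable h)
  rw [← hX, Measure.map_apply_of_aemeasurable hXm hs]

lemma measure_iInter_compl_window_le {Ω ι : Type*} [MeasurableSpace Ω] [Fintype ι]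
    {μ : Measure Ω} {X Y : ι → Ω → ℝ} (h : iIndepFun (Sum.elim X Y) μ)
    (hX : ∀ i, μ.map (X i) = unif (Set.Icc (-1) 1)) (hY : ∀ i, μ.map (Y i) = unif (Set.Icc (-1) 1))
    {η c c' : ℝ} (hη0 : 0 ≤ η) (hη1 : η ≤ 1) (hc : |c| ≤ 1) (hc' : |c'| ≤ 1) :
    μ (⋂ i, (X i ⁻¹' window η c ∩ Y i ⁻¹' window η c')ᶜ) ≤
      ENNReal.ofReal (exp (-(η ^ 2 * Fintype.card ι))) := by
  have hmeas (c : ℝ) : MeasurableSet (window η c) := measurableSet_closedBall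
  have hin {Z : Ω → ℝ} (hZ : μ.map Z = unif (Set.Icc (-1) 1)) {c : ℝ} (hc : |c| ≤ 1) :
      μ (Z ⁻¹' window η c) = ENNReal.ofReal η := by
    rw [measure_preimage_eq_of_map_eq hZ (hmeas c), unif_window hη1 hc]
  have hout {Z : Ω → ℝ} (hZ : μ.map Z = unif (Set.Icc (-1) 1)) {c : ℝ} (hc : |c| ≤ 1) :
      μ (Z ⁻¹' (window η c)ᶜ) = ENNReal.ofReal (1 - η) := by
    rw [measure_preimage_eq_of_map_eq hZ (hmeas c).compl, prob_compl_eq_one_sub (hmeas c),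
      unif_window hη1 hc, ENNReal.ofReal_sub _ hη0, ENNReal.ofReal_one]
  calc μ (⋂ i, (X i ⁻¹' window η c ∩ Y i ⁻¹' window η c')ᶜ)
      ≤ ∏ i, (μ (X i ⁻¹' window η c) * μ (Y i ⁻¹' (window η c')ᶜ) +
          μ (X i ⁻¹' (window η c)ᶜ)) :=
        measure_iInter_compl_inter_preimage_le h (hmeas c) (hmeas c')
    _ = ENNReal.ofReal ((1 - η ^ 2) ^ Fintype.card ι) := by
        simp only [hin (hX _) hc, hout (hY _) hc', hout (hX _) hc, Finset.prod_const,
          Finset.card_univ]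
        rw [← ENNReal.ofReal_mul hη0, ← ENNReal.ofReal_add (by nlinarith) (by linarith),
          ← ENNReal.ofReal_pow (by nlinarith)]
        ring_nf
    _ ≤ ENNReal.ofReal (exp (-η ^ 2) ^ Fintype.card ι) :=
        ENNReal.ofReal_le_ofReal <| pow_le_pow_left₀ (by nlinarith) (one_sub_le_exp_neg _) _
    _ = ENNReal.ofReal (exp (-(η ^ 2 * Fintype.card ι))) := by
        rw [← Real.exp_nat_mul]
        ring_nf

lemma abs_sum_mul_le_l0 {d : ℕ} {a x : Fin d → ℝ} (ha : ∀ t, |a t| ≤ 1) (hx : ∀ t, |x t| ≤ 1) :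
    |∑ t, a t * x t| ≤ l0 a := by
  rw [l0, Finset.card_filter, Nat.cast_sum]
  refine (Finset.abs_sum_le_sum_abs _ _).trans (Finset.sum_le_sum fun t _ => ?_)
  by_cases h : a t = 0
  · simp [h]
  · simpa [h, abs_mul] using mul_le_one₀ (ha t) (abs_nonneg _) (hx t)

def IsSparseApproxMask {d k : ℕ} (W : Fin k → Fin d → ℝ) (u : Fin k → ℝ) (a : Fin d → ℝ) (ε : ℝ)
    (m : ℕ) (b : Fin k → Fin d → ℝ) : Prop :=
  (∀ j t, b j t = 0 ∨ b j t = 1) ∧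
    (∀ x : Fin d → ℝ, (∀ t, |x t| ≤ 1) →
      |(∑ j, u j * relu (∑ t, W j t * b j t * x t)) - ∑ t, a t * x t| ≤ ε) ∧
    (∑ j, l0 (b j)) ≤ m ∧ (∀ j, l0 (b j) ≤ 1)

lemma IsSparseApproxMask.mono {d k : ℕ} {W : Fin k → Fin d → ℝ} {u : Fin k → ℝ} {a : Fin d → ℝ}
    {ε ε' : ℝ} {m m' : ℕ} {b : Fin k → Fin d → ℝ} (h : IsSparseApproxMask W u a ε m b)
    (hε : ε ≤ ε') (hm : m ≤ m') : IsSparseApproxMask W u a ε' m' b :=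
  ⟨h.1, fun x hx => (h.2.1 x hx).trans hε, h.2.2.1.trans hm, h.2.2.2⟩

lemma isSparseApproxMask_zero {d k : ℕ} (W : Fin k → Fin d → ℝ) (u : Fin k → ℝ) {a : Fin d → ℝ}
    (ha : ∀ t, |a t| ≤ 1) : IsSparseApproxMask W u a (l0 a) 0 0 :=
  ⟨by simp, fun x hx => by simpa [relu] using abs_sum_mul_le_l0 ha hx, by simp [l0],
    by simp [l0]⟩

def HitsWindows {d k n : ℕ} (η : ℝ) (a : Fin d → ℝ) {T : Finset (Fin d)}
    (block : T × Fin n → Fin k) (W : Fin k → Fin d → ℝ) (u : Fin k → ℝ) : Prop :=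
  ∀ (t : T) (σ : ℤˣ), ∃ r, W (block (t, r)) t ∈ window η σ ∧ u (block (t, r)) ∈ window η (σ * a t)

lemma exists_mask_of_hitsWindows {d k n : ℕ} {η : ℝ} {a : Fin d → ℝ} {T : Finset (Fin d)}
    {block : T × Fin n → Fin k} {W : Fin k → Fin d → ℝ} {u : Fin k → ℝ} (hη0 : 0 ≤ η)
    (hη : η < 1 / 2) (ha : ∀ t, |a t| ≤ 1) (hT : ∀ t ∉ T, a t = 0)
    (hblock : Function.Injective block) (h : HitsWindows η a block W u) :
    ∃ b, IsSparseApproxMask W u a (4 * η * T.card) (2 * T.card) b := by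
  choose r hr using h
  set sel : T × ℤˣ → Fin k := fun p => block (p.1, r p.1 p.2)
  have hsel : Function.Injective sel := by
    rintro ⟨t, σ⟩ ⟨t', σ'⟩ heq
    obtain ⟨rfl, hrr⟩ := Prod.ext_iff.1 (hblock heq)
    have hσ := (hr t σ).1
    rw [show r t σ = r t σ' from hrr] at hσ
    rw [units_eq_of_mem_window hη hσ (hr t σ').1]
  refine ⟨selectMask sel (fun p => p.1), selectMask_eq_zero_or_one _ _, fun x hx => ?_,
    (sum_l0_selectMask_le _ _).trans (by simp [mul_comm]), l0_selectMask_le_one _ hsel⟩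
  have hsupp : ∑ t, a t * x t = ∑ t : T, a t * x t := by
    rw [← Finset.sum_subset (Finset.subset_univ T) fun t _ ht => by simp [hT t ht]]
    exact (Finset.sum_coe_sort T fun t => a t * x t).symm
  rw [sum_mul_relu_selectMask _ hsel, Fintype.sum_prod_type, hsupp, ← Finset.sum_sub_distrib]
  calc |∑ t : T, (∑ σ : ℤˣ, u (sel (t, σ)) * relu (W (sel (t, σ)) t * x t) - a t * x t)|
      ≤ ∑ _t : T, 4 * η :=
        (Finset.abs_sum_le_sum_abs _ _).trans <| Finset.sum_le_sum fun t _ =>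
          abs_sum_units_mul_relu_sub_le hη0 hη.le (ha t) (hx t) (fun σ => (hr t σ).1)
            fun σ => (hr t σ).2
    _ = 4 * η * T.card := by simp [mul_comm]

lemma measure_compl_hitsWindows_le {Ω : Type*} [MeasurableSpace Ω] {μ : Measure Ω} {d k n : ℕ}
    {W : Fin k → Ω → Fin d → ℝ} {u : Ω → Fin k → ℝ}
    (hindep : iIndepFun
      (Sum.elim (fun p : Fin k × Fin d => fun ω => W p.1 ω p.2)
        (fun j : Fin k => fun ω => u ω j)) μ)
    (hWdist : ∀ j t, μ.map (fun ω => W j ω t) = unif (Set.Icc (-1 : ℝ) 1))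
    (hudist : ∀ j, μ.map (fun ω => u ω j) = unif (Set.Icc (-1 : ℝ) 1))
    {η : ℝ} {a : Fin d → ℝ} {T : Finset (Fin d)} {block : T × Fin n → Fin k}
    (hblock : Function.Injective block) (hη0 : 0 ≤ η) (hη1 : η ≤ 1) (ha : ∀ t, |a t| ≤ 1) :
    μ {ω | HitsWindows η a block (fun j => W j ω) (u ω)}ᶜ ≤
      ENNReal.ofReal (2 * T.card * exp (-(η ^ 2 * n))) := by
  have hfail (p : T × ℤˣ) : μ (⋂ r : Fin n,
      ((fun ω => W (block (p.1, r)) ω p.1) ⁻¹' window η p.2 ∩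
        (fun ω => u ω (block (p.1, r))) ⁻¹' window η (p.2 * a p.1))ᶜ) ≤
      ENNReal.ofReal (exp (-(η ^ 2 * n))) := by
    have hinj : Function.Injective fun r : Fin n => block (p.1, r) :=
      fun r r' h => by simpa using hblock h
    simpa using measure_iInter_compl_window_le
      (hindep.sum_elim_comp (f := fun r => (block (p.1, r), p.1)) (g := fun r => block (p.1, r))
        (fun r r' h => hinj (Prod.ext_iff.1 h).1) hinj)
      (fun r => hWdist _ _) (fun r => hudist _) hη0 hη1 (abs_units_cast p.2).le
      (by rw [abs_mul, abs_units_cast, one_mul]; exact ha _)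
  have hcompl : {ω | HitsWindows η a block (fun j => W j ω) (u ω)}ᶜ = ⋃ p : T × ℤˣ, ⋂ r : Fin n,
      ((fun ω => W (block (p.1, r)) ω p.1) ⁻¹' window η p.2 ∩
        (fun ω => u ω (block (p.1, r))) ⁻¹' window η (p.2 * a p.1))ᶜ := by
    ext ω
    simp [HitsWindows]
  rw [hcompl]
  calc μ _ ≤ ∑ p : T × ℤˣ, ENNReal.ofReal (exp (-(η ^ 2 * n))) :=
        (measure_iUnion_fintype_le _ _).trans (Finset.sum_le_sum fun p _ => hfail p)
    _ = ENNReal.ofReal (2 * T.card * exp (-(η ^ 2 * n))) := by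
        rw [Finset.sum_const, Finset.card_univ, Fintype.card_prod, nsmul_eq_mul,
          ← ENNReal.ofReal_natCast, ← ENNReal.ofReal_mul (by positivity)]
        simp [mul_comm]

lemma ofReal_one_sub_le_measure {Ω : Type*} [MeasurableSpace Ω] {μ : Measure Ω}
    [IsProbabilityMeasure μ] {s : Set Ω} {δ : ℝ} (hδ : 0 ≤ δ) (h : μ sᶜ ≤ ENNReal.ofReal δ) :
    ENNReal.ofReal (1 - δ) ≤ μ s := by
  rw [ENNReal.ofReal_sub _ hδ, ENNReal.ofReal_one, tsub_le_iff_right, ← measure_univ (μ := μ)]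
  exact (measure_univ_le_add_compl s).trans (by gcongr)

lemma two_mul_mul_exp_neg_le {s ε δ : ℝ} (hs : 0 < s) (hε : 0 < ε) (hδ : 0 < δ) :
    2 * s * exp (-((ε / (4 * s)) ^ 2 * ⌈16 * s ^ 2 / ε ^ 2 * log (2 * s / δ)⌉₊)) ≤ δ := by
  have hlog : log (2 * s / δ) ≤ (ε / (4 * s)) ^ 2 * ⌈16 * s ^ 2 / ε ^ 2 * log (2 * s / δ)⌉₊ :=
    calc log (2 * s / δ) = (ε / (4 * s)) ^ 2 * (16 * s ^ 2 / ε ^ 2 * log (2 * s / δ)) := by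
          field_simp
          ring
      _ ≤ _ := by gcongr; exact Nat.le_ceil _
  calc 2 * s * exp (-((ε / (4 * s)) ^ 2 * ⌈16 * s ^ 2 / ε ^ 2 * log (2 * s / δ)⌉₊))
      ≤ 2 * s * exp (-log (2 * s / δ)) := by gcongr
    _ = δ := by
        rw [exp_neg, exp_log (by positivity)]
        field_simp

theorem sparse_linear_by_pruning_general
    (d k s : ℕ) (hs1 : 1 ≤ s)
    (wstar : Fin d → ℝ) (hwstar : ∀ t, |wstar t| ≤ 1 / Real.sqrt s)
    (hsparse : l0 wstar ≤ s)
    (ε δ : ℝ) (hε : 0 < ε) (hδ : 0 < δ)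
    {Ω : Type*} [MeasurableSpace Ω] (μ : Measure Ω) [IsProbabilityMeasure μ]
    (W : Fin k → Ω → (Fin d → ℝ)) (u : Ω → (Fin k → ℝ))
    (hindep : iIndepFun
      (Sum.elim (fun p : Fin k × Fin d => fun ω => W p.1 ω p.2)
        (fun j : Fin k => fun ω => u ω j)) μ)
    (hWdist : ∀ (j : Fin k) (t : Fin d),
      μ.map (fun ω => W j ω t) = unif (Set.Icc (-1 : ℝ) 1))
    (hudist : ∀ j : Fin k, μ.map (fun ω => u ω j) = unif (Set.Icc (-1 : ℝ) 1))
    (hk : (s : ℝ) * ⌈16 * (s : ℝ) ^ 2 / ε ^ 2 * Real.log (2 * s / δ)⌉₊ ≤ (k : ℝ)) :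
    ENNReal.ofReal (1 - δ) ≤ μ {ω | ∃ b : Fin k → Fin d → ℝ,
      (∀ j t, b j t = 0 ∨ b j t = 1) ∧
      (∀ x : Fin d → ℝ, (∀ t, |x t| ≤ 1) →
        |(∑ j, u ω j * relu (∑ t, W j ω t * b j t * x t)) - ∑ t, wstar t * x t| ≤ ε) ∧
      (∑ j, l0 (b j)) ≤ 2 * s ∧ (∀ j, l0 (b j) ≤ 1)} := by
  have hs : (0 : ℝ) < s := by exact_mod_cast hs1
  have ha (t : Fin d) : |wstar t| ≤ 1 :=
    (hwstar t).trans <|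
      div_le_one_of_le₀ (Real.one_le_sqrt.2 (by exact_mod_cast hs1)) (sqrt_nonneg _)
  rcases le_or_gt (s : ℝ) ε with hsε | hεs
  · exact (ofReal_one_sub_le_measure hδ.le (s := Set.univ) (by simp)).trans <| measure_mono
      fun ω _ => ⟨0, (isSparseApproxMask_zero _ _ ha).mono ((Nat.cast_le.2 hsparse).trans hsε)
        zero_le⟩
  set T := Finset.univ.filter fun t => wstar t ≠ 0
  set n := ⌈16 * (s : ℝ) ^ 2 / ε ^ 2 * Real.log (2 * s / δ)⌉₊
  have hTs : T.card ≤ s := hsparse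
  have hT : (T.card : ℝ) ≤ s := by exact_mod_cast hTs
  obtain ⟨block⟩ : Nonempty (T × Fin n ↪ Fin k) := Function.Embedding.nonempty_of_card_le <| by
    simpa using (Nat.mul_le_mul_right n hTs).trans (by exact_mod_cast hk)
  set η := ε / (4 * s) with hη_def
  have hη : η < 1 / 2 := by rw [div_lt_iff₀ (by positivity)]; linarith
  refine (ofReal_one_sub_le_measure hδ.le
    (s := {ω | HitsWindows η wstar block (fun j => W j ω) (u ω)}) ?_).trans
    (measure_mono fun ω hω => ?_)
  · refine (measure_compl_hitsWindows_le hindep hWdist hudist block.injective (by positivity)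
      (hη.le.trans (by norm_num)) ha).trans (ENNReal.ofReal_le_ofReal ?_)
    calc 2 * T.card * exp (-(η ^ 2 * n)) ≤ 2 * s * exp (-(η ^ 2 * n)) := by gcongr
      _ ≤ δ := two_mul_mul_exp_neg_le hs hε hδ
  · refine (exists_mask_of_hitsWindows (W := fun j => W j ω) (by positivity) hη ha
      (fun t ht => by simpa [T] using ht) block.injective hω).imp fun b hb => hb.mono ?_ (by omega)
    calc 4 * η * T.card ≤ 4 * η * s := by gcongr
      _ = ε := by rw [hη_def]; field_simp

/-- an `s`-sparse linear function `x ↦ ⟨w*, x⟩` can be approximated,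
with probability at least `1-δ`, by pruning a random two-layer ReLU network with
i.i.d. uniform weights, when `k ≥ s·⌈(16s²/ε²)·log(2s/δ)⌉`, using at most `2s`
active weights overall and at most one per neuron. -/
theorem sparse_linear_by_pruning
    (d k s : ℕ) (hd : 0 < d) (hs1 : 1 ≤ s) (hsd : s ≤ d)
    (wstar : Fin d → ℝ) (hwstar : ∀ t, |wstar t| ≤ 1 / Real.sqrt s)
    (hsparse : l0 wstar ≤ s)
    (ε δ : ℝ) (hε : 0 < ε) (hδ : 0 < δ)
    {Ω : Type*} [MeasurableSpace Ω] (μ : Measure Ω) [IsProbabilityMeasure μ]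
    (W : Fin k → Ω → (Fin d → ℝ)) (u : Ω → (Fin k → ℝ))
    (hindep : iIndepFun
      (Sum.elim (fun p : Fin k × Fin d => fun ω => W p.1 ω p.2)
        (fun j : Fin k => fun ω => u ω j)) μ)
    (hWdist : ∀ (j : Fin k) (t : Fin d),
      μ.map (fun ω => W j ω t) = unif (Set.Icc (-1 : ℝ) 1))
    (hudist : ∀ j : Fin k, μ.map (fun ω => u ω j) = unif (Set.Icc (-1 : ℝ) 1))
    (hk : (s : ℝ) * ⌈16 * (s : ℝ) ^ 2 / ε ^ 2 * Real.log (2 * s / δ)⌉₊ ≤ (k : ℝ)) :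
    ENNReal.ofReal (1 - δ) ≤ μ {ω | ∃ b : Fin k → Fin d → ℝ,
      (∀ j t, b j t = 0 ∨ b j t = 1) ∧
      (∀ x : Fin d → ℝ, (∀ t, |x t| ≤ 1) →
        |(∑ j, u ω j * relu (∑ t, W j ω t * b j t * x t)) - ∑ t, wstar t * x t| ≤ ε) ∧
      (∑ j, l0 (b j)) ≤ 2 * s ∧ (∀ j, l0 (b j) ≤ 1)} :=
  sparse_linear_by_pruning_general d k s hs1 wstar hwstar hsparse ε δ hε hδ μ W u hindep hWdist
    hudist hk
end
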